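/- arXiv:2211.11392 — 2 statements merged into one kernel-verified Lean document; each statement's English description precedes it below -/
import Mathlib

section
/- The big-M formulation correctly encodes the ReLU function: given real numbers v, ṽ, bounds M_low < 0 < M_up with M_low ≤ ṽ ≤ M_up, and a binary variable j ∈ {0,1}, the constraints v ≥ ṽ, v ≥ 0, v ≤ ṽ − M_low·(1−j), and v ≤ M_up·j are satisfiable (for some choice of j) if and only if v = max(ṽ, 0). -/
/-- The big-M formulation correctly encodes the ReLU function: the constraints are
satisfiable for some binary `j` iff `v = max ṽ 0`. -/
theorem bigM_relu_encoding (v vt Mlow Mup : ℝ)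
    (hMlow : Mlow < 0) (hMup : 0 < Mup) (hlb : Mlow ≤ vt) (hub : vt ≤ Mup) :
    (∃ j : ℝ, (j = 0 ∨ j = 1) ∧
      vt ≤ v ∧ 0 ≤ v ∧ v ≤ vt - Mlow * (1 - j) ∧ v ≤ Mup * j) ↔ v = max vt 0 := by
  constructor
  · rintro ⟨j, (rfl | rfl), h1, h2, h3, h4⟩
    · have hv0 : v = 0 := le_antisymm (by nlinarith) h2
      have : vt ≤ 0 := hv0 ▸ h1
      simp [hv0, max_eq_right this]
    · have : v = vt := le_antisymm (by nlinarith) h1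
      simp [this, max_eq_left (this ▸ h2)]
  · rintro rfl
    rcases le_total vt 0 with h | h
    · exact ⟨0, Or.inl rfl, le_max_left _ _, le_max_right _ _,
        by rw [max_eq_right h]; nlinarith, by rw [max_eq_right h]; nlinarith⟩
    · exact ⟨1, Or.inr rfl, le_max_left _ _, le_max_right _ _,
        by rw [max_eq_left h]; nlinarith, by rw [max_eq_left h]; nlinarith⟩
end

section
/- For any choice of binary variable j ∈ {0,1} and any ṽ with M_low ≤ ṽ ≤ M_up (M_low < 0 < M_up), if v satisfies v ≥ ṽ, v ≥ 0, v ≤ ṽ − M_low·(1−j), and v ≤ M_up·j, then v = max(ṽ, 0) whenever ṽ ≠ 0; i.e., the big-M ReLU encoding admits a unique feasible output value for nonzero inputs. -/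
/-- For any binary `j` and any `ṽ ≠ 0` within the big-M bounds, the big-M ReLU
constraints force `v = max ṽ 0`. -/
theorem bigM_relu_unique (v vt Mlow Mup j : ℝ)
    (hMlow : Mlow < 0) (hMup : 0 < Mup) (hlb : Mlow ≤ vt) (hub : vt ≤ Mup)
    (hj : j = 0 ∨ j = 1)
    (h1 : vt ≤ v) (h2 : 0 ≤ v) (h3 : v ≤ vt - Mlow * (1 - j)) (h4 : v ≤ Mup * j)
    (hvt : vt ≠ 0) :
    v = max vt 0 := by
  rcases hj with rfl | rfl
  · simp only [mul_zero] at h4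
    have hv : v = 0 := le_antisymm h4 h2
    have : vt < 0 := lt_of_le_of_ne (by linarith [h1]) hvt
    rw [hv, max_eq_right this.le]
  · simp only [sub_self, mul_zero] at h3
    have hvt0 : 0 < vt := by
      rcases lt_or_gt_of_ne hvt with h | h
      · nlinarith
      · exact h
    rw [max_eq_left hvt0.le]
    linarith
end
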